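/- Every interval persistence module is indecomposable: it is nonzero and cannot be written as a direct sum of two nonzero persistence modules. -/

import Mathlib

open Classical

noncomputable section

/-- A point of the parameter space `ℝⁿ`. -/
abbrev Pt (n : ℕ) := Fin n → ℝ

/-- Shift of a point by the diagonal vector `(ε, …, ε)`. -/
def shiftPt {n : ℕ} (u : Pt n) (ε : ℝ) : Pt n := fun i => u i + ε

lemma shiftPt_mono {n : ℕ} {u v : Pt n} (ε : ℝ) (h : u ≤ v) :
    shiftPt u ε ≤ shiftPt v ε := fun i => add_le_add (h i) (le_refl ε)

lemma le_shiftPt {n : ℕ} (u : Pt n) {ε : ℝ} (hε : 0 ≤ ε) : u ≤ shiftPt u ε :=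
  fun i => le_add_of_nonneg_right hε

/-- An `n`-parameter persistence module over the field `k`. -/
structure PersMod (k : Type) [Field k] (n : ℕ) where
  obj : Pt n → Type
  [acg : ∀ u, AddCommGroup (obj u)]
  [mod : ∀ u, Module k (obj u)]
  map : ∀ {u v : Pt n}, u ≤ v → (obj u →ₗ[k] obj v)
  map_id : ∀ u : Pt n, map (le_refl u) = LinearMap.id
  map_comp : ∀ {u v w : Pt n} (h1 : u ≤ v) (h2 : v ≤ w),
    (map h2).comp (map h1) = map (h1.trans h2)

attribute [instance] PersMod.acg PersMod.mod

variable {k : Type} [Field k] {n : ℕ}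

/-- A morphism of persistence modules. -/
structure PersHom (M N : PersMod k n) where
  app : ∀ u, M.obj u →ₗ[k] N.obj u
  natural : ∀ {u v : Pt n} (h : u ≤ v),
    (app v).comp (M.map h) = (N.map h).comp (app u)

/-- A morphism is trivial when every component is the zero map. -/
def PersHom.Trivial {M N : PersMod k n} (f : PersHom M N) : Prop := ∀ u, f.app u = 0

/-- The `ε`-shift of a persistence module. -/
def PersMod.shift (M : PersMod k n) (ε : ℝ) : PersMod k n where
  obj u := M.obj (shiftPt u ε)
  map h := M.map (shiftPt_mono ε h)
  map_id u := M.map_id _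
  map_comp h1 h2 := M.map_comp _ _

/-- `(f, g)` is an `ε`-interleaving pair between `M` and `N`. -/
def IsInterleavingPair (M N : PersMod k n) (ε : ℝ) (hε : 0 ≤ ε)
    (f : PersHom M (N.shift ε)) (g : PersHom N (M.shift ε)) : Prop :=
  (∀ u : Pt n, (g.app (shiftPt u ε)).comp (f.app u) =
      M.map ((le_shiftPt u hε).trans (le_shiftPt _ hε))) ∧
  (∀ u : Pt n, (f.app (shiftPt u ε)).comp (g.app u) =
      N.map ((le_shiftPt u hε).trans (le_shiftPt _ hε)))

/-- `M` and `N` are `ε`-interleaved. -/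
def Interleaved (M N : PersMod k n) (ε : ℝ) : Prop :=
  ∃ (hε : 0 ≤ ε) (f : PersHom M (N.shift ε)) (g : PersHom N (M.shift ε)),
    IsInterleavingPair M N ε hε f g

/-- The interleaving distance, with value in the extended reals. -/
def interleavingDist (M N : PersMod k n) : EReal :=
  sInf {x : EReal | ∃ ε : ℝ, Interleaved M N ε ∧ x = (ε : EReal)}

/-- `M` is `ε`-trivial : all transition maps `M_u → M_{u+(ε,…,ε)}` vanish. -/
def EpsTrivial (M : PersMod k n) (ε : ℝ) : Prop :=
  ∀ (u : Pt n) (h : u ≤ shiftPt u ε), M.map h = 0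

/-- The zero persistence module. -/
def ZeroMod (k : Type) [Field k] (n : ℕ) : PersMod k n where
  obj _ := PUnit
  map _ := 0
  map_id _ := by apply LinearMap.ext; intro x; exact Subsingleton.elim _ _
  map_comp _ _ := by apply LinearMap.ext; intro x; exact Subsingleton.elim _ _

/-- The space at `u` of the interval module on `I` : all of `k` if `u ∈ I`, `0` otherwise. -/
def segSpace (k : Type) [Field k] {n : ℕ} (I : Set (Pt n)) (u : Pt n) : Submodule k k where
  carrier := {x | u ∉ I → x = 0}
  add_mem' := by intro x y hx hy h; simp only [Set.mem_setOf_eq] at *; rw [hx h, hy h, add_zero]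
  zero_mem' := fun _ => rfl
  smul_mem' := by intro c x hx h; simp only [Set.mem_setOf_eq] at *; rw [hx h, smul_zero]

/-- The interval persistence module on an order-convex set `I` : `k` on `I` with identity
internal transition maps, `0` elsewhere. -/
def IntervalMod (k : Type) [Field k] {n : ℕ} (I : Set (Pt n)) (hI : I.OrdConnected) :
    PersMod k n where
  obj u := segSpace k I u
  map {u v} h :=
    { toFun := fun x => ⟨if v ∈ I then (x : k) else 0, by intro hv; simp [hv]⟩
      map_add' := by intro x y; apply Subtype.ext; by_cases hv : v ∈ I <;> simp [hv]
      map_smul' := by intro c x; apply Subtype.ext; by_cases hv : v ∈ I <;> simp [hv] }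
  map_id u := by
    apply LinearMap.ext; intro x
    apply Subtype.ext
    by_cases hu : u ∈ I
    · simp [hu]
    · simp [hu, x.2 hu]
  map_comp {u v w} h1 h2 := by
    apply LinearMap.ext; intro x
    apply Subtype.ext
    by_cases hw : w ∈ I
    · by_cases hv : v ∈ I
      · simp [hw, hv]
      · by_cases hu : u ∈ I
        · exact absurd (hI.out hu hw ⟨h1, h2⟩) hv
        · simp [hw, hv, x.2 hu]
    · simp [hw]

/-- The open box `∏ᵢ (aᵢ, bᵢ)` with extended-real endpoints. -/
def box {n : ℕ} (a b : Fin n → EReal) : Set (Pt n) :=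
  {u | ∀ i, a i < (u i : EReal) ∧ (u i : EReal) < b i}

lemma box_ordConnected {n : ℕ} (a b : Fin n → EReal) : (box a b).OrdConnected := by
  constructor
  intro u hu w hw v hv i
  exact ⟨lt_of_lt_of_le (hu i).1 (by exact_mod_cast hv.1 i),
    lt_of_le_of_lt (by exact_mod_cast hv.2 i) (hw i).2⟩

/-- The rectangle persistence module with underlying open rectangle `∏ᵢ (aᵢ, bᵢ)`. -/
def RectMod (k : Type) [Field k] {n : ℕ} (a b : Fin n → EReal) : PersMod k n :=
  IntervalMod k (box a b) (box_ordConnected a b)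

/-- Subtraction of extended reals with the conventions `(±∞) − (±∞) = 0`. -/
def esub (x y : EReal) : EReal :=
  if (x = ⊤ ∧ y = ⊤) ∨ (x = ⊥ ∧ y = ⊥) then 0 else x - y

/-- Absolute value on the extended reals (`|±∞| = +∞`). -/
def eabs (x : EReal) : EReal := max x (-x)

/-- The `ℓ^∞`-distance `‖x − y‖_∞` on extended `ℝⁿ`. -/
def supDist {n : ℕ} (x y : Fin n → EReal) : EReal := ⨆ i, eabs (esub (x i) (y i))

/-- The closed formula for the interleaving distance between the rectangle modules with
rectangles `∏ (aᵢ, bᵢ)` and `∏ (cᵢ, dᵢ)`. -/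
def dIFormula {n : ℕ} (a b c d : Fin n → EReal) : EReal :=
  min (max (⨅ i, esub (b i) (a i) / 2) (⨅ i, esub (d i) (c i) / 2))
      (max (supDist c a) (supDist d b))

/-- `M` and `N` are isomorphic persistence modules. -/
def PersIso (M N : PersMod k n) : Prop :=
  ∃ f : PersHom M N, ∀ u, Function.Bijective (f.app u)

/-- `M` is a non-zero persistence module. -/
def PersMod.Nonzero (M : PersMod k n) : Prop := ∃ (u : Pt n) (x : M.obj u), x ≠ 0

/-- Direct sum of two persistence modules. -/
def dirSum (M N : PersMod k n) : PersMod k n where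
  obj u := M.obj u × N.obj u
  map h := (M.map h).prodMap (N.map h)
  map_id u := by
    apply LinearMap.ext; intro x
    show ((M.map (le_refl u)) x.1, (N.map (le_refl u)) x.2) = x
    rw [M.map_id, N.map_id]; rfl
  map_comp h1 h2 := by
    apply LinearMap.ext; intro x
    show ((M.map _) ((M.map _) x.1), (N.map _) ((N.map _) x.2))
      = ((M.map _) x.1, (N.map _) x.2)
    have hM : (M.map h2) ((M.map h1) x.1) = (M.map (h1.trans h2)) x.1 := by
      rw [← M.map_comp h1 h2]; rfl
    have hN : (N.map h2) ((N.map h1) x.2) = (N.map (h1.trans h2)) x.2 := by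
      rw [← N.map_comp h1 h2]; rfl
    rw [hM, hN]

/-- Zigzag-connectedness of a subset of `ℝⁿ`. -/
def ZigzagConnected {n : ℕ} (I : Set (Pt n)) : Prop :=
  ∀ u ∈ I, ∀ v ∈ I,
    Relation.ReflTransGen (fun x y => x ∈ I ∧ y ∈ I ∧ (x ≤ y ∨ y ≤ x)) u v

/-- `I` is an interval in `ℝⁿ`: nonempty, order-convex and zigzag-connected. -/
def IsInterval {n : ℕ} (I : Set (Pt n)) : Prop :=
  I.Nonempty ∧ I.OrdConnected ∧ ZigzagConnected I

/-- A partial multibijection `Fin m ⇸ Fin k'`, encoded by an `Option`-valued map that is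
injective on matched indices. -/
def PartialInj {m k' : ℕ} (σ : Fin m → Option (Fin k')) : Prop :=
  ∀ i j l, σ i = some l → σ j = some l → i = j

/-- `σ` is an `ε`-matching between the barcodes `A` and `B` (families of intervals). -/
def IsEpsMatching (k : Type) [Field k] {n m k' : ℕ}
    (A : Fin m → Set (Pt n)) (hA : ∀ i, (A i).OrdConnected)
    (B : Fin k' → Set (Pt n)) (hB : ∀ j, (B j).OrdConnected)
    (σ : Fin m → Option (Fin k')) (ε : ℝ) : Prop :=
  PartialInj σ ∧
  (∀ i, σ i = none → EpsTrivial (IntervalMod k (A i) (hA i)) (2 * ε)) ∧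
  (∀ j, (∀ i, σ i ≠ some j) → EpsTrivial (IntervalMod k (B j) (hB j)) (2 * ε)) ∧
  (∀ i j, σ i = some j →
    Interleaved (IntervalMod k (A i) (hA i)) (IntervalMod k (B j) (hB j)) ε)

/-- The bottleneck distance between the interval decomposable modules with barcodes
`A` and `B`. -/
def bottleneckDist (k : Type) [Field k] {n m k' : ℕ}
    (A : Fin m → Set (Pt n)) (hA : ∀ i, (A i).OrdConnected)
    (B : Fin k' → Set (Pt n)) (hB : ∀ j, (B j).OrdConnected) : EReal :=
  sInf {x : EReal | ∃ (ε : ℝ) (σ : Fin m → Option (Fin k')),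
    0 ≤ ε ∧ IsEpsMatching k A hA B hB σ ε ∧ x = (ε : EReal)}

/-! An isomorphism `I^I ≅ M₁ ⊕ M₂` makes every space of `M₁ ⊕ M₂` of rank at most one, so at a
point `u₀ ∈ I` one summand, say `M₁`, vanishes. The transition maps of `I^I` between comparable
points of `I` are bijective, hence so are those of `M₁`; by zigzag-connectedness `M₁` vanishes on
all of `I`, and off `I` it vanishes because `I^I` does. -/

theorem PersMod.not_nonzero_iff {M : PersMod k n} :
    ¬ M.Nonzero ↔ ∀ u, Subsingleton (M.obj u) := by
  simp only [PersMod.Nonzero, not_exists, not_not, ← subsingleton_iff_forall_eq]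

theorem ZigzagConnected.apply_eq_apply {α : Type*} {I : Set (Pt n)} (hI : ZigzagConnected I)
    {f : Pt n → α} (hf : ∀ u ∈ I, ∀ v ∈ I, u ≤ v → f u = f v) {u v : Pt n}
    (hu : u ∈ I) (hv : v ∈ I) : f u = f v := by
  obtain hchain := hI u hu v hv
  clear hv
  induction hchain with
  | refl => rfl
  | tail _ hstep ih =>
    obtain ⟨hb, hc, hle | hle⟩ := hstep
    · exact ih.trans (hf _ hb _ hc hle)
    · exact ih.trans (hf _ hc _ hb hle).symm

universe u

theorem Module.subsingleton_or_subsingleton_of_rank_prod_le_one {R : Type*} {M N : Type u}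
    [DivisionRing R] [AddCommGroup M] [Module R M] [AddCommGroup N] [Module R N]
    (h : Module.rank R (M × N) ≤ 1) : Subsingleton M ∨ Subsingleton N := by
  by_contra! hMN
  obtain ⟨hM, hN⟩ := hMN
  have h2 : (2 : Cardinal) ≤ 1 := calc
    (2 : Cardinal) = 1 + 1 := one_add_one_eq_two.symm
    _ ≤ Module.rank R M + Module.rank R N :=
      add_le_add (Cardinal.one_le_iff_pos.2 rank_pos) (Cardinal.one_le_iff_pos.2 rank_pos)
    _ = Module.rank R (M × N) := rank_prod'.symm
    _ ≤ 1 := h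
  norm_num at h2

section Iso

variable {M N : PersMod k n}

theorem PersIso.rank_obj_eq (e : PersIso M N) (u : Pt n) :
    Module.rank k (M.obj u) = Module.rank k (N.obj u) := by
  obtain ⟨f, hf⟩ := e
  exact (LinearEquiv.ofBijective (f.app u) (hf u)).rank_eq

theorem PersIso.subsingleton_obj (e : PersIso M N) {u : Pt n} (hu : Subsingleton (M.obj u)) :
    Subsingleton (N.obj u) := by
  obtain ⟨f, hf⟩ := e
  exact (Equiv.ofBijective _ (hf u)).subsingleton_congr.1 hu

theorem PersIso.map_bijective (e : PersIso M N) {u v : Pt n} (h : u ≤ v)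
    (hM : Function.Bijective (M.map h)) : Function.Bijective (N.map h) := by
  obtain ⟨f, hf⟩ := e
  have hcomm : ⇑(N.map h) ∘ ⇑(f.app u) = ⇑(f.app v) ∘ ⇑(M.map h) :=
    congrArg DFunLike.coe (f.natural h).symm
  rw [← Function.Bijective.of_comp_iff _ (hf u), hcomm]
  exact (hf v).comp hM

end Iso

section DirSum

variable {M₁ M₂ : PersMod k n}

theorem dirSum_map_bijective_iff {u v : Pt n} (h : u ≤ v) :
    Function.Bijective ((dirSum M₁ M₂).map h) ↔
      Function.Bijective (M₁.map h) ∧ Function.Bijective (M₂.map h) :=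
  Prod.map_bijective

theorem dirSum_subsingleton_obj_iff {u : Pt n} :
    Subsingleton ((dirSum M₁ M₂).obj u) ↔ Subsingleton (M₁.obj u) ∧ Subsingleton (M₂.obj u) :=
  show Subsingleton (M₁.obj u × M₂.obj u) ↔ Subsingleton (M₁.obj u) ∧ Subsingleton (M₂.obj u) from
    ⟨fun _ => ⟨(Prod.fst_surjective (β := M₂.obj u)).subsingleton,
      (Prod.snd_surjective (α := M₁.obj u)).subsingleton⟩,
      fun ⟨_, _⟩ => inferInstance⟩

end DirSum

section IntervalMod

variable {I : Set (Pt n)} (hI : I.OrdConnected)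

theorem IntervalMod.nonzero (hne : I.Nonempty) : (IntervalMod k I hI).Nonzero := by
  obtain ⟨u, hu⟩ := hne
  exact ⟨u, ⟨1, fun h => absurd hu h⟩, fun h => one_ne_zero (congrArg Subtype.val h)⟩

theorem IntervalMod.subsingleton_obj {u : Pt n} (hu : u ∉ I) :
    Subsingleton ((IntervalMod k I hI).obj u) :=
  ⟨fun x y => Subtype.ext ((x.2 hu).trans (y.2 hu).symm)⟩

theorem IntervalMod.rank_obj_le_one (u : Pt n) :
    Module.rank k ((IntervalMod k I hI).obj u) ≤ 1 :=
  (Submodule.rank_le (segSpace k I u)).trans_eq (Module.rank_self k)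

theorem IntervalMod.map_apply_val {u v : Pt n} (h : u ≤ v) (x : (IntervalMod k I hI).obj u) :
    ((IntervalMod k I hI).map h x).val = if v ∈ I then x.val else 0 :=
  rfl

theorem IntervalMod.map_bijective {u v : Pt n} (hu : u ∈ I) (hv : v ∈ I) (h : u ≤ v) :
    Function.Bijective ((IntervalMod k I hI).map h) := by
  refine ⟨fun x y hxy => Subtype.ext ?_, fun y => ⟨⟨y.1, fun h => absurd hu h⟩, Subtype.ext ?_⟩⟩
  · have hval := congrArg Subtype.val hxy
    rwa [IntervalMod.map_apply_val, IntervalMod.map_apply_val, if_pos hv, if_pos hv] at hval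
  · exact (IntervalMod.map_apply_val hI h _).trans (if_pos hv)

end IntervalMod

theorem PersMod.not_nonzero_of_subsingleton_obj {N : PersMod k n} {I : Set (Pt n)}
    (hzig : ZigzagConnected I)
    (hbij : ∀ u ∈ I, ∀ v ∈ I, ∀ h : u ≤ v, Function.Bijective (N.map h))
    (hout : ∀ u ∉ I, Subsingleton (N.obj u)) {u₀ : Pt n} (hu₀ : u₀ ∈ I)
    (h₀ : Subsingleton (N.obj u₀)) : ¬ N.Nonzero := by
  refine PersMod.not_nonzero_iff.2 fun u => ?_
  by_cases hu : u ∈ I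
  · have hconst : Subsingleton (N.obj u₀) = Subsingleton (N.obj u) :=
      hzig.apply_eq_apply (f := fun u => Subsingleton (N.obj u))
        (fun u hu v hv h => propext (Equiv.ofBijective _ (hbij u hu v hv h)).subsingleton_congr)
        hu₀ hu
    exact hconst ▸ h₀
  · exact hout u hu

theorem intervalMod_indecomposable (I : Set (Pt n)) (hI : I.OrdConnected)
    (hint : IsInterval I) :
    (IntervalMod k I hI).Nonzero ∧
      ¬ ∃ M₁ M₂ : PersMod k n, M₁.Nonzero ∧ M₂.Nonzero ∧
        PersIso (IntervalMod k I hI) (dirSum M₁ M₂) := by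
  obtain ⟨⟨u₀, hu₀⟩, -, hzig⟩ := hint
  refine ⟨IntervalMod.nonzero hI ⟨u₀, hu₀⟩, ?_⟩
  rintro ⟨M₁, M₂, h₁, h₂, e⟩
  have hbij : ∀ u ∈ I, ∀ v ∈ I, ∀ h : u ≤ v,
      Function.Bijective (M₁.map h) ∧ Function.Bijective (M₂.map h) := fun u hu v hv h =>
    (dirSum_map_bijective_iff h).1 (e.map_bijective h (IntervalMod.map_bijective hI hu hv h))
  have hout : ∀ u ∉ I, Subsingleton (M₁.obj u) ∧ Subsingleton (M₂.obj u) := fun u hu =>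
    dirSum_subsingleton_obj_iff.1 (e.subsingleton_obj (IntervalMod.subsingleton_obj hI hu))
  have hrank := (e.rank_obj_eq u₀).symm.trans_le (IntervalMod.rank_obj_le_one hI u₀)
  rcases Module.subsingleton_or_subsingleton_of_rank_prod_le_one
    (M := M₁.obj u₀) (N := M₂.obj u₀) hrank with h | h
  · exact PersMod.not_nonzero_of_subsingleton_obj hzig (fun u hu v hv h => (hbij u hu v hv h).1)
      (fun u hu => (hout u hu).1) hu₀ h h₁
  · exact PersMod.not_nonzero_of_subsingleton_obj hzig (fun u hu v hv h => (hbij u hu v hv h).2)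
      (fun u hu => (hout u hu).2) hu₀ h h₂

end
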